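/- arXiv:1310.7248 — 8 statements merged into one kernel-verified Lean document; each statement's English description precedes it below -/
import Mathlib

section
/- Let X be a Banach space with a normalized Schauder basis B = (e_n) and E = (ε_n). A vector x_0 ∈ K_{B,E} is an extreme point of K_{B,E} if and only if |e_n*(x_0)| = ε_n for all n. -/
open Filter Topology

/-- A (Schauder) basis of a normed space, with biorthogonal coefficient functionals `f`. -/
structure SchauderBasis' (X : Type*) [NormedAddCommGroup X] [NormedSpace ℝ X] where
  e : ℕ → X
  f : ℕ → X →L[ℝ] ℝ
  biorth : ∀ i j, f i (e j) = if i = j then 1 else 0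
  expansion : ∀ x : X,
    Tendsto (fun N => ∑ n ∈ Finset.range N, f n x • e n) atTop (𝓝 x)

/-- The brick corresponding to a basis `B` and half-heights `ε`. -/
def brick {X : Type*} [NormedAddCommGroup X] [NormedSpace ℝ X]
    (B : SchauderBasis' X) (ε : ℕ → ℝ) : Set X :=
  {x | ∀ n, |B.f n x| ≤ ε n}

/-- `x₀ ∈ A` is an extreme point of `A` if `A` contains no nondegenerate segment
centered at `x₀`: for every nonzero `x` some point `x₀ + λ • x` with `|λ| ≤ 1`
lies outside `A`. -/
def IsExtremePointOf {X : Type*} [NormedAddCommGroup X] [NormedSpace ℝ X]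
    (x₀ : X) (A : Set X) : Prop :=
  x₀ ∈ A ∧ ∀ x : X, x ≠ 0 → ∃ lam : ℝ, |lam| ≤ 1 ∧ x₀ + lam • x ∉ A


/-! A coordinate with slack, `|e_n*(x₀)| < ε_n`, lets `x₀` move along `e_n`, which changes no
other coordinate. If every coordinate is tight, a nonzero direction `x` has some coordinate
`b = e_n*(x) ≠ 0` (by the basis expansion), and with `a = e_n*(x₀)` one of `x₀ ± x` leaves the
brick, since `(a + b)² + (a - b)² = 2a² + 2b² > 2a²`. -/

namespace SchauderBasis'

variable {X : Type*} [NormedAddCommGroup X] [NormedSpace ℝ X] (B : SchauderBasis' X)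

theorem f_self (n : ℕ) : B.f n (B.e n) = 1 := by
  simpa using B.biorth n n

theorem e_ne_zero (n : ℕ) : B.e n ≠ 0 := fun h => by
  simpa [h] using B.f_self n

theorem f_add_smul_e (x : X) (c : ℝ) (m n : ℕ) :
    B.f m (x + c • B.e n) = B.f m x + if m = n then c else 0 := by
  simp [B.biorth m n]

theorem eq_zero_of_forall_f_eq_zero {x : X} (h : ∀ n, B.f n x = 0) : x = 0 :=
  tendsto_nhds_unique (B.expansion x) (by simp [h])

end SchauderBasis'

theorem exists_abs_le_one_abs_lt_abs_add_mul (a : ℝ) {b : ℝ} (hb : b ≠ 0) :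
    ∃ lam : ℝ, |lam| ≤ 1 ∧ |a| < |a + lam * b| := by
  by_contra! h
  have hplus := sq_le_sq.mpr (h 1 (by norm_num))
  have hminus := sq_le_sq.mpr (h (-1) (by norm_num))
  have : 0 < b ^ 2 := by positivity
  nlinarith

section Brick

variable {X : Type*} [NormedAddCommGroup X] [NormedSpace ℝ X] {B : SchauderBasis' X}
  {ε : ℕ → ℝ} {x : X} {n : ℕ}

theorem add_smul_e_mem_brick (hx : x ∈ brick B ε) {c : ℝ} (hc : |B.f n x + c| ≤ ε n) :
    x + c • B.e n ∈ brick B ε := by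
  intro m
  rw [B.f_add_smul_e]
  split_ifs with hmn
  · exact hmn ▸ hc
  · simpa using hx m

theorem not_isExtremePointOf_brick_of_abs_lt (hn : |B.f n x| < ε n) :
    ¬ IsExtremePointOf x (brick B ε) := by
  set δ := ε n - |B.f n x|
  have hδ : 0 < δ := sub_pos.mpr hn
  rintro ⟨hx, hext⟩
  obtain ⟨lam, hlam, hout⟩ := hext (δ • B.e n) (smul_ne_zero hδ.ne' (B.e_ne_zero n))
  refine hout (smul_smul lam δ (B.e n) ▸ add_smul_e_mem_brick hx ?_)
  calc |B.f n x + lam * δ| ≤ |B.f n x| + |lam| * δ :=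
        (abs_add_le _ _).trans_eq (by rw [abs_mul, abs_of_pos hδ])
    _ ≤ |B.f n x| + δ := by gcongr; exact mul_le_of_le_one_left hδ.le hlam
    _ = ε n := by ring

theorem isExtremePointOf_brick_of_forall_abs_eq (htight : ∀ n, |B.f n x| = ε n) :
    IsExtremePointOf x (brick B ε) := by
  refine ⟨fun n => (htight n).le, fun y hy => ?_⟩
  obtain ⟨n, hn⟩ : ∃ n, B.f n y ≠ 0 := by
    by_contra! h
    exact hy (B.eq_zero_of_forall_f_eq_zero h)
  obtain ⟨lam, hlam, hlt⟩ := exists_abs_le_one_abs_lt_abs_add_mul (B.f n x) hn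
  refine ⟨lam, hlam, fun hmem => ?_⟩
  have hle := hmem n
  simp only [map_add, map_smul, smul_eq_mul] at hle
  linarith [htight n]

end Brick

theorem stmt5_general (X : Type*) [NormedAddCommGroup X] [NormedSpace ℝ X]
    (B : SchauderBasis' X)
    (ε : ℕ → ℝ) (x₀ : X) :
    IsExtremePointOf x₀ (brick B ε) ↔ ∀ n, |B.f n x₀| = ε n :=
  ⟨fun hext n => (hext.1 n).eq_of_not_lt fun hlt =>
      not_isExtremePointOf_brick_of_abs_lt hlt hext,
    isExtremePointOf_brick_of_forall_abs_eq⟩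

theorem stmt5 (X : Type*) [NormedAddCommGroup X] [NormedSpace ℝ X] [CompleteSpace X]
    (B : SchauderBasis' X) (hnorm : ∀ n, ‖B.e n‖ = 1)
    (ε : ℕ → ℝ) (hε : ∀ n, 0 ≤ ε n) (x₀ : X) (hx₀ : x₀ ∈ brick B ε) :
    IsExtremePointOf x₀ (brick B ε) ↔ ∀ n, |B.f n x₀| = ε n :=
  stmt5_general X B ε x₀
end

section
/- If a brick K_{B,E} has an extreme point, then ε_n → 0 as n → ∞. -/
open Filter Topology

theorem tendsto_zero_of_tendsto_sum_range {G : Type*} [AddCommGroup G] [TopologicalSpace G]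
    [IsTopologicalAddGroup G] {u : ℕ → G} {a : G}
    (h : Tendsto (fun N => ∑ n ∈ Finset.range N, u n) atTop (𝓝 a)) :
    Tendsto u atTop (𝓝 0) := by
  have hdiff := (h.comp (tendsto_add_atTop_nat 1)).sub h
  rw [sub_self] at hdiff
  refine hdiff.congr fun N => ?_
  simp only [Function.comp_apply, Finset.sum_range_succ, add_sub_cancel_left]

theorem SchauderBasis'.tendsto_coeff_smul {X : Type*} [NormedAddCommGroup X] [NormedSpace ℝ X]
    (B : SchauderBasis' X) (x : X) : Tendsto (fun n => B.f n x • B.e n) atTop (𝓝 0) :=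
  tendsto_zero_of_tendsto_sum_range (B.expansion x)

theorem stmt6_general (X : Type*) [NormedAddCommGroup X] [NormedSpace ℝ X]
    (B : SchauderBasis' X) (hnorm : ∀ n, ‖B.e n‖ = 1)
    (ε : ℕ → ℝ)
    (x₀ : X) (hext : ∀ n, |B.f n x₀| = ε n) :
    Tendsto ε atTop (𝓝 0) := by
  have hnorm_terms : ∀ n, ‖B.f n x₀ • B.e n‖ = ε n := fun n => by
    rw [norm_smul, hnorm, mul_one, Real.norm_eq_abs, hext]
  simpa only [hnorm_terms, norm_zero] using (B.tendsto_coeff_smul x₀).norm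

/-- If the brick has an extreme point (a point `x₀` with `|B.f n x₀| = ε n` for
all `n`), then `ε n → 0`. -/
theorem stmt6 (X : Type*) [NormedAddCommGroup X] [NormedSpace ℝ X] [CompleteSpace X]
    (B : SchauderBasis' X) (hnorm : ∀ n, ‖B.e n‖ = 1)
    (ε : ℕ → ℝ) (hε : ∀ n, 0 ≤ ε n)
    (x₀ : X) (hext : ∀ n, |B.f n x₀| = ε n) :
    Tendsto ε atTop (𝓝 0) :=
  stmt6_general X B hnorm ε x₀ hext
end

section
/- In the space c of convergent real sequences with the supremum norm, consider the summing basis e_n = (0,…,0,1,1,1,…) (n−1 zeros). The brick with half-heights ε_n = 1/n contains an extreme point (namely x_0 = ∑ (−1)^{n+1} e_n / n), yet is unbounded, since ‖∑_{k=1}^n e_k/k‖ = ∑_{k=1}^n 1/k → ∞. -/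
/-!
In the summing basis the `k`-th coordinate of `∑ aₙ sb n` is the partial sum `a₀ + ⋯ + aₖ`, so the
coefficients of a point of the brick are recovered as successive differences of its coordinates.
The alternating series `∑ (-1)ⁿ/(n+1)` converges, so `x₀` exists, and each of its coefficients sits
at the end of its allowed interval `[-1/(n+1), 1/(n+1)]`: moving `x₀` along a nonzero direction `x`
by `±x` pushes some coefficient outside, so `x₀` is extreme. The finite sums `∑_{k<n} sb k/(k+1)`
lie in the brick, and since their coordinates increase up to the harmonic number `Hₙ`, their norm
is `Hₙ → ∞`.
-/

open Filter Topology

/-- The space `c`-style ambient space: bounded real sequences with the sup norm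
(`ℕ` carries the discrete topology). The summing basis and all sets considered
below live in this space. The `n`-th summing basis vector: `n` zeros followed by ones. -/
noncomputable def sb (n : ℕ) : BoundedContinuousFunction ℕ ℝ :=
  BoundedContinuousFunction.ofNormedAddCommGroup
    (fun k => if n ≤ k then (1 : ℝ) else 0)
    (continuous_of_discreteTopology) 1
    (by intro k; dsimp; split <;> simp)

/-- The brick built on the summing basis with half-heights `1/(n+1)`:
all sums of convergent series `∑ aₙ • sb n` with `|aₙ| ≤ 1/(n+1)`. -/
noncomputable def sumBrick : Set (BoundedContinuousFunction ℕ ℝ) :=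
  {x | ∃ a : ℕ → ℝ, (∀ n, |a n| ≤ 1 / (n + 1)) ∧
    Tendsto (fun N => ∑ n ∈ Finset.range N, a n • sb n) atTop (𝓝 x)}

open Finset

lemma sb_apply (n k : ℕ) : sb n k = if n ≤ k then (1 : ℝ) else 0 := rfl

lemma sum_range_smul_sb_apply (a : ℕ → ℝ) (N k : ℕ) :
    (∑ n ∈ range N, a n • sb n) k = ∑ n ∈ range (min N (k + 1)), a n := by
  have hfilter : (range N).filter (· ≤ k) = range (min N (k + 1)) := by
    ext m
    simp only [mem_filter, mem_range]
    omega
  simp only [BoundedContinuousFunction.sum_apply, BoundedContinuousFunction.smul_apply, sb_apply,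
    smul_eq_mul, mul_ite, mul_one, mul_zero, ← sum_filter, hfilter]

lemma cauchySeq_sum_range_smul_sb {a : ℕ → ℝ}
    (ha : CauchySeq fun N => ∑ n ∈ range N, a n) :
    CauchySeq fun N => ∑ n ∈ range N, a n • sb n := by
  rw [Metric.cauchySeq_iff] at ha ⊢
  intro ε hε
  obtain ⟨N₀, hN₀⟩ := ha (ε / 2) (half_pos hε)
  refine ⟨N₀, fun M hM N hN => lt_of_le_of_lt ?_ (half_lt_self hε)⟩
  refine (BoundedContinuousFunction.dist_le (half_pos hε).le).2 fun k => ?_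
  simp only [sum_range_smul_sb_apply]
  -- the `k`-th coordinates agree unless both partial-sum indices are at least `N₀`
  rcases le_or_gt (k + 1) (min M N) with hk | hk
  · rw [show min M (k + 1) = min N (k + 1) by omega, dist_self]
    exact (half_pos hε).le
  · exact (hN₀ _ (by omega) _ (by omega)).le

noncomputable def sbCoeff (y : BoundedContinuousFunction ℕ ℝ) : ℕ → ℝ
  | 0 => y 0
  | k + 1 => y (k + 1) - y k

lemma apply_eq_sum_of_tendsto {a : ℕ → ℝ} {y : BoundedContinuousFunction ℕ ℝ}
    (hy : Tendsto (fun N => ∑ n ∈ range N, a n • sb n) atTop (𝓝 y)) (k : ℕ) :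
    y k = ∑ n ∈ range (k + 1), a n := by
  have hk : Tendsto (fun N => (∑ n ∈ range N, a n • sb n) k) atTop (𝓝 (y k)) :=
    ((continuous_eval_const k).tendsto y).comp hy
  refine tendsto_nhds_unique hk (tendsto_const_nhds.congr' ?_)
  filter_upwards [eventually_ge_atTop (k + 1)] with N hN
  rw [sum_range_smul_sb_apply, min_eq_right hN]

lemma sbCoeff_of_tendsto {a : ℕ → ℝ} {y : BoundedContinuousFunction ℕ ℝ}
    (hy : Tendsto (fun N => ∑ n ∈ range N, a n • sb n) atTop (𝓝 y)) (n : ℕ) :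
    sbCoeff y n = a n := by
  cases n with
  | zero => simp [sbCoeff, apply_eq_sum_of_tendsto hy 0]
  | succ k =>
    rw [sbCoeff, apply_eq_sum_of_tendsto hy, apply_eq_sum_of_tendsto hy, sum_range_succ _ (k + 1)]
    ring

lemma abs_sbCoeff_le_of_mem_sumBrick {y : BoundedContinuousFunction ℕ ℝ} (hy : y ∈ sumBrick)
    (n : ℕ) : |sbCoeff y n| ≤ 1 / (n + 1) := by
  obtain ⟨a, ha, hconv⟩ := hy
  exact sbCoeff_of_tendsto hconv n ▸ ha n

lemma sbCoeff_add_smul (y x : BoundedContinuousFunction ℕ ℝ) (c : ℝ) (n : ℕ) :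
    sbCoeff (y + c • x) n = sbCoeff y n + c * sbCoeff x n := by
  cases n with
  | zero => rfl
  | succ k =>
    simp only [sbCoeff, BoundedContinuousFunction.add_apply, BoundedContinuousFunction.smul_apply,
      smul_eq_mul]
    ring

lemma eq_zero_of_sbCoeff_eq_zero {x : BoundedContinuousFunction ℕ ℝ}
    (hx : ∀ n, sbCoeff x n = 0) : x = 0 := by
  ext k
  induction k with
  | zero => exact hx 0
  | succ k ih =>
    have hk := hx (k + 1)
    rw [sbCoeff] at hk
    rw [BoundedContinuousFunction.coe_zero, Pi.zero_apply] at ih ⊢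
    linarith

lemma abs_lt_abs_add_or_abs_lt_abs_sub {a b : ℝ} (hb : b ≠ 0) : |a| < |a + b| ∨ |a| < |a - b| := by
  -- `(a + b)² + (a - b)² = 2a² + 2b² > 2a²`
  by_contra! h
  have hb2 : 0 < b ^ 2 := by positivity
  nlinarith [sq_abs a, sq_abs (a + b), sq_abs (a - b), abs_nonneg a, abs_nonneg (a + b),
    abs_nonneg (a - b)]

theorem isExtremePointOf_sumBrick {y : BoundedContinuousFunction ℕ ℝ} (hy : y ∈ sumBrick)
    (hcoeff : ∀ n, |sbCoeff y n| = 1 / (n + 1)) : IsExtremePointOf y sumBrick := by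
  refine ⟨hy, fun x hx => ?_⟩
  obtain ⟨m, hm⟩ : ∃ m, sbCoeff x m ≠ 0 := by
    by_contra! h
    exact hx (eq_zero_of_sbCoeff_eq_zero h)
  have hout : ∀ c : ℝ, |sbCoeff y m| < |sbCoeff y m + c * sbCoeff x m| →
      y + c • x ∉ sumBrick := fun c hc hmem => by
    have hle := abs_sbCoeff_le_of_mem_sumBrick hmem m
    rw [sbCoeff_add_smul, ← hcoeff m] at hle
    exact hc.not_ge hle
  rcases abs_lt_abs_add_or_abs_lt_abs_sub hm with h | h
  · exact ⟨1, by norm_num, hout 1 (by rwa [one_mul])⟩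
  · exact ⟨-1, by norm_num, hout (-1) (by rwa [neg_one_mul, ← sub_eq_add_neg])⟩

lemma sum_range_smul_sb_mem_sumBrick {a : ℕ → ℝ} {n : ℕ} (ha : ∀ k < n, |a k| ≤ 1 / (k + 1)) :
    ∑ k ∈ range n, a k • sb k ∈ sumBrick := by
  set b : ℕ → ℝ := fun k => if k < n then a k else 0 with hb
  refine ⟨b, fun k => ?_, ?_⟩
  · by_cases hk : k < n
    · simpa only [hb, if_pos hk] using ha k hk
    · simp only [hb, if_neg hk, abs_zero]
      positivity
  · have hsum : ∑ k ∈ range n, b k • sb k = ∑ k ∈ range n, a k • sb k :=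
      sum_congr rfl fun k hk => by simp only [hb, if_pos (mem_range.1 hk)]
    rw [← hsum]
    refine (hasSum_sum_of_ne_finset_zero fun k hk => ?_).tendsto_sum_nat
    simp only [hb, if_neg (mt mem_range.2 hk), zero_smul]

lemma norm_sum_range_smul_sb_of_nonneg {a : ℕ → ℝ} (ha : ∀ k, 0 ≤ a k) (n : ℕ) :
    ‖∑ k ∈ range n, a k • sb k‖ = ∑ k ∈ range n, a k := by
  have hsum_nonneg : ∀ j, 0 ≤ ∑ k ∈ range j, a k := fun j => sum_nonneg fun k _ => ha k
  refine le_antisymm ((BoundedContinuousFunction.norm_le (hsum_nonneg n)).2 fun j => ?_) ?_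
  · rw [sum_range_smul_sb_apply, Real.norm_eq_abs, abs_of_nonneg (hsum_nonneg _)]
    exact sum_le_sum_of_subset_of_nonneg (range_subset_range.2 (min_le_left _ _))
      fun k _ _ => ha k
  · calc ∑ k ∈ range n, a k = (∑ k ∈ range n, a k • sb k) n := by
          rw [sum_range_smul_sb_apply, min_eq_left n.le_succ]
      _ ≤ ‖∑ k ∈ range n, a k • sb k‖ :=
          (Real.le_norm_self _).trans (BoundedContinuousFunction.norm_coe_le_norm _ n)

lemma not_isBounded_sumBrick : ¬ Bornology.IsBounded sumBrick := by
  intro hbdd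
  obtain ⟨C, hC⟩ := isBounded_iff_forall_norm_le.1 hbdd
  obtain ⟨n, hn⟩ := (Real.tendsto_sum_range_one_div_nat_succ_atTop.eventually_gt_atTop C).exists
  have hmem : ∑ k ∈ range n, (1 / (k + 1) : ℝ) • sb k ∈ sumBrick :=
    sum_range_smul_sb_mem_sumBrick fun k _ => (abs_of_pos (by positivity)).le
  have hle := hC _ hmem
  rw [norm_sum_range_smul_sb_of_nonneg (fun k => by positivity)] at hle
  linarith

lemma cauchySeq_sum_range_alternating_harmonic :
    CauchySeq fun N => ∑ n ∈ range N, ((-1) ^ n / (n + 1) : ℝ) := by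
  have hanti : Antitone fun n : ℕ => (1 / (n + 1) : ℝ) := fun m n hmn =>
    one_div_le_one_div_of_le (by positivity) (by gcongr)
  simpa only [mul_one_div] using
    hanti.cauchySeq_alternating_series_of_tendsto_zero tendsto_one_div_add_atTop_nhds_zero_nat

theorem stmt7 :
    (∃ x₀ : BoundedContinuousFunction ℕ ℝ,
      Tendsto (fun N => ∑ n ∈ Finset.range N, ((-1) ^ n / (n + 1) : ℝ) • sb n)
        atTop (𝓝 x₀) ∧ IsExtremePointOf x₀ sumBrick)
    ∧ (∀ n : ℕ, ‖∑ k ∈ Finset.range n, (1 / (k + 1) : ℝ) • sb k‖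
        = ∑ k ∈ Finset.range n, (1 / (k + 1) : ℝ))
    ∧ ¬ Bornology.IsBounded sumBrick := by
  obtain ⟨x₀, hx₀⟩ := cauchySeq_tendsto_of_complete
    (cauchySeq_sum_range_smul_sb cauchySeq_sum_range_alternating_harmonic)
  have habs : ∀ n : ℕ, |((-1) ^ n / (n + 1) : ℝ)| = 1 / (n + 1) := fun n => by
    rw [abs_div, abs_pow, abs_neg, abs_one, one_pow, abs_of_pos (by positivity), one_div]
  have hextreme : IsExtremePointOf x₀ sumBrick :=
    isExtremePointOf_sumBrick ⟨_, fun n => (habs n).le, hx₀⟩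
      fun n => by rw [sbCoeff_of_tendsto hx₀, habs]
  exact ⟨⟨x₀, hx₀, hextreme⟩,
    norm_sum_range_smul_sb_of_nonneg fun k => by positivity, not_isBounded_sumBrick⟩
end

section
/- Every bounded brick constructed from a boundedly complete normalized basis contains an extreme point; namely, the series ∑ ε_n e_n converges and its sum is an extreme point of the brick. -/
open Filter Topology

/-- A basis is boundedly complete if every series with bounded partial sums converges. -/
def SchauderBasis'.BoundedlyComplete {X : Type*} [NormedAddCommGroup X] [NormedSpace ℝ X]
    (B : SchauderBasis' X) : Prop :=
  ∀ a : ℕ → ℝ, (∃ C : ℝ, ∀ N, ‖∑ n ∈ Finset.range N, a n • B.e n‖ ≤ C) →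
    ∃ s : X, Tendsto (fun N => ∑ n ∈ Finset.range N, a n • B.e n) atTop (𝓝 s)

/-!
The partial sums `∑_{n<N} εₙ eₙ` have coefficients `εₙ` or `0`, so they lie in the brick and
are bounded by `L`; bounded completeness makes the series converge, and continuity of the
coefficient functionals shows that every coefficient of the sum is exactly `εₙ`.
-/

namespace SchauderBasis'

variable {X : Type*} [NormedAddCommGroup X] [NormedSpace ℝ X] (B : SchauderBasis' X)

theorem f_sum_range_smul_e (a : ℕ → ℝ) (n N : ℕ) :
    B.f n (∑ k ∈ Finset.range N, a k • B.e k) = if n < N then a n else 0 := by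
  simp only [map_sum, map_smul, B.biorth, smul_eq_mul, mul_ite, mul_one, mul_zero,
    Finset.sum_ite_eq, Finset.mem_range]

theorem f_eq_of_tendsto_sum_range {a : ℕ → ℝ} {s : X}
    (hs : Tendsto (fun N => ∑ k ∈ Finset.range N, a k • B.e k) atTop (𝓝 s)) (n : ℕ) :
    B.f n s = a n := by
  have hlim := ((B.f n).continuous.tendsto s).comp hs
  have hev : ∀ᶠ N in atTop, B.f n (∑ k ∈ Finset.range N, a k • B.e k) = a n := by
    filter_upwards [eventually_gt_atTop n] with N hN
    rw [f_sum_range_smul_e, if_pos hN]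
  exact tendsto_nhds_unique (hlim.congr' hev) tendsto_const_nhds

theorem sum_range_smul_e_mem_brick {ε : ℕ → ℝ} (hε : ∀ n, 0 ≤ ε n) (N : ℕ) :
    ∑ k ∈ Finset.range N, ε k • B.e k ∈ brick B ε := by
  intro n
  rw [f_sum_range_smul_e]
  split_ifs
  · exact (abs_of_nonneg (hε n)).le
  · simpa using hε n

end SchauderBasis'

theorem stmt9_general (X : Type*) [NormedAddCommGroup X] [NormedSpace ℝ X]
    (B : SchauderBasis' X) (hbc : B.BoundedlyComplete)
    (ε : ℕ → ℝ) (hε : ∀ n, 0 ≤ ε n)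
    (L : ℝ) (hbdd : ∀ x ∈ brick B ε, ‖x‖ ≤ L) :
    ∃ s : X, Tendsto (fun N => ∑ n ∈ Finset.range N, ε n • B.e n) atTop (𝓝 s)
      ∧ s ∈ brick B ε ∧ ∀ n, |B.f n s| = ε n := by
  obtain ⟨s, hs⟩ := hbc ε ⟨L, fun N => hbdd _ (B.sum_range_smul_e_mem_brick hε N)⟩
  have hcoef : ∀ n, |B.f n s| = ε n := fun n => by
    rw [B.f_eq_of_tendsto_sum_range hs n, abs_of_nonneg (hε n)]
  exact ⟨s, hs, fun n => (hcoef n).le, hcoef⟩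

/-- A bounded brick over a boundedly complete normalized basis contains an extreme
point: `∑ εₙ eₙ` converges and its sum is an extreme point (its coefficients have
moduli exactly `εₙ`). -/
theorem stmt9 (X : Type*) [NormedAddCommGroup X] [NormedSpace ℝ X] [CompleteSpace X]
    (B : SchauderBasis' X) (hnorm : ∀ n, ‖B.e n‖ = 1) (hbc : B.BoundedlyComplete)
    (ε : ℕ → ℝ) (hε : ∀ n, 0 ≤ ε n)
    (L : ℝ) (hbdd : ∀ x ∈ brick B ε, ‖x‖ ≤ L) :
    ∃ s : X, Tendsto (fun N => ∑ n ∈ Finset.range N, ε n • B.e n) atTop (𝓝 s)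
      ∧ s ∈ brick B ε ∧ ∀ n, |B.f n s| = ε n :=
  stmt9_general X B hbc ε hε L hbdd
end

section
/- If r^unc(K_{B,E}) := sup_{θ_n = ±1} ‖∑ θ_n ε_n e_n‖ < ∞ (in particular all such sign series converge), then r^ext(K_{B,E}) = r^unc(K_{B,E}) = sup_{x ∈ K_{B,E}} ‖x‖. -/
open Filter Topology

/-!
Every point of the brick is the limit of its partial sums `∑_{n<N} aₙ eₙ` with `|aₙ| ≤ εₙ`.
Since the norm is convex, moving one coefficient at a time to `±εₙ` shows that such a finite
sum is bounded by the norms of the finite sign sums `∑_{n<N} θₙ εₙ eₙ`, and each of these is the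
midpoint of the two sign series continuing it by `+1` and by `-1`, so it has norm at most `r`.
Conversely, the sums of the sign series are themselves extreme points of the brick.
-/

open Finset

section NormedSpace

variable {E : Type*} [NormedAddCommGroup E] [NormedSpace ℝ E]

theorem norm_add_smul_le_of_abs_le {p u : E} {c t r : ℝ} (ht : |t| ≤ c)
    (hplus : ‖p + c • u‖ ≤ r) (hminus : ‖p - c • u‖ ≤ r) : ‖p + t • u‖ ≤ r := by
  have hmem : t ∈ segment ℝ (-c) c := by
    rw [segment_eq_Icc (by linarith [abs_nonneg t])]
    exact abs_le.mp ht
  have := ((convexOn_norm convex_univ).comp_affineMap (AffineMap.lineMap p (p + u))).le_on_segment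
    (Set.mem_univ _) (Set.mem_univ _) hmem
  simp only [Function.comp_apply, AffineMap.lineMap_apply, vadd_eq_add, vsub_eq_sub,
    add_sub_cancel_left, add_comm (_ • u) p, neg_smul, neg_add_eq_sub] at this
  exact this.trans (max_le hminus hplus)

theorem norm_add_sum_le_of_forall_signs (v : ℕ → E) (ε : ℕ → ℝ) {r : ℝ} (N : ℕ) (w : E)
    (hsigns : ∀ θ : ℕ → ℝ, (∀ n, |θ n| = 1) → ‖w + ∑ n ∈ range N, (θ n * ε n) • v n‖ ≤ r)
    {a : ℕ → ℝ} (ha : ∀ n < N, |a n| ≤ ε n) : ‖w + ∑ n ∈ range N, a n • v n‖ ≤ r := by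
  induction N generalizing w with
  | zero => simpa using hsigns (fun _ => 1) (by simp)
  | succ N ih =>
    rw [sum_range_succ, ← add_assoc, add_right_comm]
    refine ih (w + a N • v N) (fun θ hθ => ?_) (fun n hn => ha n (by omega))
    have hlast : ∀ σ : ℝ, |σ| = 1 →
        ‖w + ∑ n ∈ range N, (θ n * ε n) • v n + (σ * ε N) • v N‖ ≤ r := by
      intro σ hσ
      have h := hsigns (Function.update θ N σ) fun n => by
        rcases eq_or_ne n N with rfl | hn <;> simp [*]
      rwa [sum_range_succ, Function.update_self, ← add_assoc,
        sum_congr rfl fun n hn => by rw [Function.update_of_ne (mem_range.mp hn).ne]] at h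
    rw [add_right_comm]
    exact norm_add_smul_le_of_abs_le (ha N (by omega)) (by simpa using hlast 1 (by simp))
      (by simpa [sub_eq_add_neg] using hlast (-1) (by simp))

theorem norm_sum_range_signs_le (v : ℕ → E) (ε : ℕ → ℝ) {r : ℝ}
    (hbound : ∀ θ : ℕ → ℝ, (∀ n, |θ n| = 1) → ∃ s : E,
      Tendsto (fun M => ∑ n ∈ range M, (θ n * ε n) • v n) atTop (𝓝 s) ∧ ‖s‖ ≤ r)
    {θ : ℕ → ℝ} (hθ : ∀ n, |θ n| = 1) (N : ℕ) : ‖∑ n ∈ range N, (θ n * ε n) • v n‖ ≤ r := by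
  set T := ∑ n ∈ range N, (θ n * ε n) • v n
  let extend (σ : ℝ) (n : ℕ) : ℝ := if n < N then θ n else σ
  have hextend : ∀ σ : ℝ, |σ| = 1 → ∀ n, |extend σ n| = 1 := fun σ hσ n => by
    unfold extend; split_ifs <;> simp [*]
  have hsplit : ∀ σ : ℝ, ∀ M ≥ N,
      ∑ n ∈ range M, (extend σ n * ε n) • v n = T + σ • ∑ n ∈ Ico N M, ε n • v n := by
    intro σ M hM
    rw [← sum_range_add_sum_Ico _ hM, smul_sum]
    congr 1
    · exact sum_congr rfl fun n hn => by simp only [extend, if_pos (mem_range.mp hn)]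
    · exact sum_congr rfl fun n hn => by
        simp only [extend, if_neg (not_lt.2 (mem_Ico.mp hn).1), mul_smul]
  obtain ⟨s₁, hs₁, hs₁r⟩ := hbound (extend 1) (hextend 1 (by simp))
  obtain ⟨s₂, hs₂, hs₂r⟩ := hbound (extend (-1)) (hextend (-1) (by simp))
  have hmid : s₁ + s₂ = (2 : ℝ) • T :=
    tendsto_nhds_unique_of_eventuallyEq (hs₁.add hs₂) tendsto_const_nhds <|
      eventually_atTop.2 ⟨N, fun M hM => by
        dsimp only
        rw [hsplit 1 M hM, hsplit (-1) M hM]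
        module⟩
  have := norm_add_le s₁ s₂
  rw [hmid, norm_smul, Real.norm_two] at this
  linarith

end NormedSpace

namespace SchauderBasis'

variable {X : Type*} [NormedAddCommGroup X] [NormedSpace ℝ X] (B : SchauderBasis' X)

theorem coeff_eq_of_tendsto {c : ℕ → ℝ} {s : X}
    (hs : Tendsto (fun N => ∑ n ∈ range N, c n • B.e n) atTop (𝓝 s)) (m : ℕ) :
    B.f m s = c m :=
  tendsto_nhds_unique_of_eventuallyEq (((B.f m).continuous.tendsto s).comp hs)
    tendsto_const_nhds <| eventually_atTop.2 ⟨m + 1, fun N hN => by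
      simp [B.biorth, show m < N by omega]⟩

theorem norm_le_of_mem_brick {ε : ℕ → ℝ} {r : ℝ}
    (hbound : ∀ θ : ℕ → ℝ, (∀ n, |θ n| = 1) → ∃ s : X,
      Tendsto (fun M => ∑ n ∈ range M, (θ n * ε n) • B.e n) atTop (𝓝 s) ∧ ‖s‖ ≤ r)
    {x : X} (hx : x ∈ brick B ε) : ‖x‖ ≤ r :=
  le_of_tendsto (B.expansion x).norm <| Eventually.of_forall fun N => by
    simpa using norm_add_sum_le_of_forall_signs B.e ε N 0
      (fun θ hθ => by simpa using norm_sum_range_signs_le B.e ε hbound hθ N) fun n _ => hx n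

end SchauderBasis'

theorem stmt11_general (X : Type*) [NormedAddCommGroup X] [NormedSpace ℝ X]
    (B : SchauderBasis' X)
    (ε : ℕ → ℝ) (hε : ∀ n, 0 ≤ ε n)
    (hconv : ∀ θ : ℕ → ℝ, (∀ n, |θ n| = 1) →
      ∃ s : X, Tendsto (fun N => ∑ n ∈ Finset.range N, (θ n * ε n) • B.e n) atTop (𝓝 s))
    (r : ℝ)
    (hr : IsLUB {c : ℝ | ∃ (θ : ℕ → ℝ) (s : X), (∀ n, |θ n| = 1) ∧
      Tendsto (fun N => ∑ n ∈ Finset.range N, (θ n * ε n) • B.e n) atTop (𝓝 s) ∧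
      c = ‖s‖} r) :
    IsLUB {c : ℝ | ∃ x₀ : X, (∀ n, |B.f n x₀| = ε n) ∧ c = ‖x₀‖} r
      ∧ IsLUB {c : ℝ | ∃ x ∈ brick B ε, c = ‖x‖} r := by
  have hbound : ∀ θ : ℕ → ℝ, (∀ n, |θ n| = 1) → ∃ s : X,
      Tendsto (fun M => ∑ n ∈ range M, (θ n * ε n) • B.e n) atTop (𝓝 s) ∧ ‖s‖ ≤ r :=
    fun θ hθ => (hconv θ hθ).imp fun s hs => ⟨hs, hr.1 ⟨θ, s, hθ, hs, rfl⟩⟩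
  have hextreme : ∀ (θ : ℕ → ℝ) (s : X), (∀ n, |θ n| = 1) →
      Tendsto (fun M => ∑ n ∈ range M, (θ n * ε n) • B.e n) atTop (𝓝 s) →
      ∀ n, |B.f n s| = ε n := fun θ s hθ hs n => by
    rw [B.coeff_eq_of_tendsto hs, abs_mul, hθ, one_mul, abs_of_nonneg (hε n)]
  refine ⟨⟨?_, fun b hb => hr.2 ?_⟩, ⟨?_, fun b hb => hr.2 ?_⟩⟩
  · rintro _ ⟨x₀, hx₀, rfl⟩
    exact B.norm_le_of_mem_brick hbound fun n => (hx₀ n).le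
  · rintro _ ⟨θ, s, hθ, hs, rfl⟩
    exact hb ⟨s, hextreme θ s hθ hs, rfl⟩
  · rintro _ ⟨x, hx, rfl⟩
    exact B.norm_le_of_mem_brick hbound hx
  · rintro _ ⟨θ, s, hθ, hs, rfl⟩
    exact hb ⟨s, fun n => (hextreme θ s hθ hs n).le, rfl⟩

/-- If the unconditional radius `r = sup_θ ‖∑ θₙ εₙ eₙ‖` is finite (in particular all
the sign series converge), then it equals both the extreme radius (the sup of the
norms of points `x₀` with `|B.f n x₀| = ε n` for all `n`) and `sup_{x ∈ K} ‖x‖`. -/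
theorem stmt11 (X : Type*) [NormedAddCommGroup X] [NormedSpace ℝ X] [CompleteSpace X]
    (B : SchauderBasis' X) (hnorm : ∀ n, ‖B.e n‖ = 1)
    (ε : ℕ → ℝ) (hε : ∀ n, 0 ≤ ε n)
    (hconv : ∀ θ : ℕ → ℝ, (∀ n, |θ n| = 1) →
      ∃ s : X, Tendsto (fun N => ∑ n ∈ Finset.range N, (θ n * ε n) • B.e n) atTop (𝓝 s))
    (r : ℝ)
    (hr : IsLUB {c : ℝ | ∃ (θ : ℕ → ℝ) (s : X), (∀ n, |θ n| = 1) ∧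
      Tendsto (fun N => ∑ n ∈ Finset.range N, (θ n * ε n) • B.e n) atTop (𝓝 s) ∧
      c = ‖s‖} r) :
    IsLUB {c : ℝ | ∃ x₀ : X, (∀ n, |B.f n x₀| = ε n) ∧ c = ‖x₀‖} r
      ∧ IsLUB {c : ℝ | ∃ x ∈ brick B ε, c = ‖x‖} r :=
  stmt11_general X B ε hε hconv r hr
end

section
/- Every brick constructed from an unconditional normalized basis whose extreme radius is finite is compact. -/
/-!
Let `x₀` be an extreme point and `y n = f n x₀ • e n`. Flipping signs in the expansion of `x₀`
and averaging with the original shows that every subseries of `∑ y n` converges. Choosing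
disjoint blocks of indices with large sums would produce a subseries that is not Cauchy, so
`‖∑ n ∈ G, y n‖` is uniformly small over finite sets `G` of large indices. By the maximum
principle for the convex function `a ↦ ‖∑ a n • y n‖` on a cube, the same holds for all
coefficients `|a n| ≤ 1`. Every `x` in the brick has `f n x = c n * f n x₀` with `|c n| ≤ 1`,
so `x` is uniformly close to its `N`-th partial sum, which ranges over the image of a compact
box. Hence the brick is totally bounded, and being closed in a Banach space, compact.
-/

open Filter Topology

/-- A basis is unconditional if, for every `x`, the expansion of `x` still converges
after any change of signs of its terms. -/
def SchauderBasis'.Unconditional {X : Type*} [NormedAddCommGroup X] [NormedSpace ℝ X]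
    (B : SchauderBasis' X) : Prop :=
  ∀ (x : X) (θ : ℕ → ℝ), (∀ n, |θ n| = 1) →
    ∃ s : X, Tendsto (fun N => ∑ n ∈ Finset.range N, (θ n * B.f n x) • B.e n) atTop (𝓝 s)

open Finset

theorem Metric.totallyBounded_of_forall_exists_dist_lt {α : Type*} [PseudoMetricSpace α] {s : Set α}
    (h : ∀ δ > 0, ∃ t : Set α, TotallyBounded t ∧ ∀ x ∈ s, ∃ y ∈ t, dist x y < δ) :
    TotallyBounded s := by
  refine Metric.totallyBounded_iff.2 fun δ hδ => ?_
  obtain ⟨t, ht, hst⟩ := h (δ / 2) (half_pos hδ)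
  obtain ⟨F, hF, htF⟩ := Metric.totallyBounded_iff.1 ht (δ / 2) (half_pos hδ)
  refine ⟨F, hF, fun x hx => ?_⟩
  obtain ⟨y, hy, hxy⟩ := hst x hx
  obtain ⟨z, hz, hyz⟩ := Set.mem_iUnion₂.1 (htF hy)
  exact Set.mem_iUnion₂.2 ⟨z, hz, by
    rw [Metric.mem_ball] at hyz ⊢
    linarith [dist_triangle x y z]⟩

theorem exists_abs_le_one_eq_mul_of_abs_le {a b : ℝ} (h : |a| ≤ |b|) :
    ∃ c : ℝ, |c| ≤ 1 ∧ a = c * b := by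
  rcases eq_or_ne b 0 with rfl | hb
  · exact ⟨0, by simp, by simpa using h⟩
  · refine ⟨a / b, ?_, (div_mul_cancel₀ a hb).symm⟩
    rwa [abs_div, div_le_one (abs_pos.2 hb)]

section SubseriesConvergence

variable {X : Type*} [NormedAddCommGroup X]

theorem exists_norm_sum_lt_of_cauchySeq_indicator {y : ℕ → X}
    (hy : ∀ S : Set ℕ, CauchySeq fun N => ∑ n ∈ range N, S.indicator y n)
    {δ : ℝ} (hδ : 0 < δ) :
    ∃ N, ∀ G : Finset ℕ, (∀ n ∈ G, N ≤ n) → ‖∑ n ∈ G, y n‖ < δ := by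
  classical
  by_contra! h
  choose g hg_ge hg_norm using h
  let φ : ℕ → ℕ := fun k => Nat.rec 0 (fun _ M => M + (g M).sup id + 1) k
  have hφ_succ : ∀ k, φ (k + 1) = φ k + (g (φ k)).sup id + 1 := fun _ => rfl
  have hφ : StrictMono φ := strictMono_nat_of_lt_succ fun k => by rw [hφ_succ]; omega
  have hg_mem : ∀ k, ∀ n ∈ g (φ k), φ k ≤ n ∧ n < φ (k + 1) := fun k n hn =>
    ⟨hg_ge _ n hn, by
      have := le_sup (f := id) hn
      rw [hφ_succ]; simp only [id] at this; omega⟩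
  set S : Set ℕ := ⋃ k, ↑(g (φ k))
  have hblock : ∀ k, ∑ n ∈ Ico (φ k) (φ (k + 1)), S.indicator y n = ∑ n ∈ g (φ k), y n := by
    intro k
    rw [sum_indicator_eq_sum_filter]
    congr 1
    ext n
    simp only [mem_filter, mem_Ico, S, Set.mem_iUnion, mem_coe]
    constructor
    · rintro ⟨⟨hkn, hnk⟩, j, hj⟩
      obtain ⟨hjn, hnj⟩ := hg_mem j n hj
      have : j < k + 1 := hφ.lt_iff_lt.1 (hjn.trans_lt hnk)
      have : k < j + 1 := hφ.lt_iff_lt.1 (hkn.trans_lt hnj)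
      obtain rfl : j = k := by omega
      exact hj
    · exact fun hn => ⟨hg_mem k n hn, k, hn⟩
  obtain ⟨M, hM⟩ := Metric.cauchySeq_iff.1 (hy S) δ hδ
  have hMφ : M ≤ φ M := hφ.le_apply
  have := hM (φ (M + 1)) (hMφ.trans (hφ.monotone M.le_succ)) (φ M) hMφ
  rw [dist_eq_norm, ← sum_Ico_eq_sub _ (hφ.monotone M.le_succ), hblock] at this
  exact this.not_ge (hg_norm _)

variable [NormedSpace ℝ X]

theorem exists_finset_norm_sum_smul_le {ι : Type*} [Fintype ι] (y : ι → X) {a : ι → ℝ}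
    (ha : ∀ i, a i ∈ Set.Icc 0 1) :
    ∃ s : Finset ι, ‖∑ i, a i • y i‖ ≤ ‖∑ i ∈ s, y i‖ := by
  classical
  have hconv : ConvexOn ℝ Set.univ fun b : ι → ℝ => ‖∑ i, b i • y i‖ := by
    simpa [Function.comp_def] using convexOn_univ_norm.comp_linearMap
      (∑ i, (LinearMap.proj i : (ι → ℝ) →ₗ[ℝ] ℝ).smulRight (y i))
  have ha' : a ∈ convexHull ℝ (Set.univ.pi fun _ => ({0, 1} : Set ℝ)) := by
    rw [convexHull_pi, convexHull_pair, segment_eq_Icc zero_le_one]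
    exact fun i _ => ha i
  obtain ⟨θ, hθ, hle⟩ := hconv.exists_ge_of_mem_convexHull (Set.subset_univ _) ha'
  refine ⟨univ.filter (θ · = 1), hle.trans_eq ?_⟩
  rw [sum_filter]
  congr 1
  refine sum_congr rfl fun i _ => ?_
  obtain h | h : θ i = 0 ∨ θ i = 1 := hθ i (Set.mem_univ i)
  all_goals simp [h]

theorem exists_norm_sum_smul_lt_of_cauchySeq_indicator {y : ℕ → X}
    (hy : ∀ S : Set ℕ, CauchySeq fun N => ∑ n ∈ range N, S.indicator y n)
    {δ : ℝ} (hδ : 0 < δ) :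
    ∃ N, ∀ G : Finset ℕ, (∀ n ∈ G, N ≤ n) → ∀ a : ℕ → ℝ, (∀ n, |a n| ≤ 1) →
      ‖∑ n ∈ G, a n • y n‖ < δ := by
  obtain ⟨N, hN⟩ := exists_norm_sum_lt_of_cauchySeq_indicator hy (half_pos hδ)
  refine ⟨N, fun G hG a ha => ?_⟩
  have hunit : ∀ b : ℕ → ℝ, (∀ n, b n ∈ Set.Icc 0 1) → ‖∑ n ∈ G, b n • y n‖ < δ / 2 :=
    fun b hb => by
      obtain ⟨s, hs⟩ := exists_finset_norm_sum_smul_le (fun n : G => y n) (fun n => hb n)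
      have hsG := hN (s.map (Function.Embedding.subtype _))
        (by simpa using fun n hn _ => hG n hn)
      rw [sum_map] at hsG
      rw [← sum_coe_sort G]
      exact hs.trans_lt hsG
  have hsplit : ∑ n ∈ G, a n • y n =
      ∑ n ∈ G, max (a n) 0 • y n - ∑ n ∈ G, max (-a n) 0 • y n := by
    rw [← sum_sub_distrib]
    refine sum_congr rfl fun n _ => ?_
    rw [← sub_smul, max_zero_sub_max_neg_zero_eq_self]
  have hpos : ∀ n, max (a n) 0 ∈ Set.Icc 0 1 := fun n =>
    ⟨le_max_right _ _, max_le (abs_le.1 (ha n)).2 zero_le_one⟩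
  have hneg : ∀ n, max (-a n) 0 ∈ Set.Icc 0 1 := fun n =>
    ⟨le_max_right _ _, max_le (by linarith [(abs_le.1 (ha n)).1]) zero_le_one⟩
  calc ‖∑ n ∈ G, a n • y n‖
      ≤ ‖∑ n ∈ G, max (a n) 0 • y n‖ + ‖∑ n ∈ G, max (-a n) 0 • y n‖ :=
        hsplit ▸ norm_sub_le _ _
    _ < δ / 2 + δ / 2 := add_lt_add (hunit _ hpos) (hunit _ hneg)
    _ = δ := add_halves δ

end SubseriesConvergence

namespace SchauderBasis'

variable {X : Type*} [NormedAddCommGroup X] [NormedSpace ℝ X]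

theorem isClosed_brick (B : SchauderBasis' X) (ε : ℕ → ℝ) : IsClosed (brick B ε) := by
  simp only [brick, Set.ofPred_forall]
  exact isClosed_iInter fun n => isClosed_le (by fun_prop) continuous_const

theorem norm_sub_sum_range_le (B : SchauderBasis' X) {x : X} {N : ℕ} {δ : ℝ}
    (h : ∀ M ≥ N, ‖∑ n ∈ Ico N M, B.f n x • B.e n‖ ≤ δ) :
    ‖x - ∑ n ∈ range N, B.f n x • B.e n‖ ≤ δ := by
  refine le_of_tendsto ((B.expansion x).sub_const _).norm ?_
  filter_upwards [eventually_ge_atTop N] with M hM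
  rw [← sum_Ico_eq_sub _ hM]
  exact h M hM

namespace Unconditional

variable {B : SchauderBasis' X}

theorem cauchySeq_sum_indicator (hB : B.Unconditional) (x₀ : X) (S : Set ℕ) :
    CauchySeq fun N => ∑ n ∈ range N, S.indicator (fun n => B.f n x₀ • B.e n) n := by
  classical
  obtain ⟨s, hs⟩ := hB x₀ (fun n => if n ∈ S then 1 else -1) fun n => by split_ifs <;> simp
  refine (Tendsto.congr (fun N => ?_)
    (((B.expansion x₀).add hs).const_smul (2⁻¹ : ℝ))).cauchySeq
  rw [← sum_add_distrib, smul_sum]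
  refine sum_congr rfl fun n _ => ?_
  by_cases hn : n ∈ S
  · simp only [hn, Set.indicator_of_mem, if_true, one_mul]
    module
  · simp [hn]

theorem exists_forall_brick_norm_sub_sum_range_le (hB : B.Unconditional) (x₀ : X) {δ : ℝ}
    (hδ : 0 < δ) :
    ∃ N, ∀ x ∈ brick B (fun n => |B.f n x₀|), ‖x - ∑ n ∈ range N, B.f n x • B.e n‖ ≤ δ := by
  obtain ⟨N, hN⟩ :=
    exists_norm_sum_smul_lt_of_cauchySeq_indicator (hB.cauchySeq_sum_indicator x₀) hδ
  refine ⟨N, fun x hx => B.norm_sub_sum_range_le fun M _ => ?_⟩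
  choose c hc hcx using fun n => exists_abs_le_one_eq_mul_of_abs_le (hx n)
  have hsum : ∑ n ∈ Ico N M, B.f n x • B.e n = ∑ n ∈ Ico N M, c n • (B.f n x₀ • B.e n) :=
    sum_congr rfl fun n _ => by rw [hcx n, mul_smul]
  rw [hsum]
  exact (hN _ (fun n hn => (mem_Ico.1 hn).1) c hc).le

theorem totallyBounded_brick (hB : B.Unconditional) (x₀ : X) :
    TotallyBounded (brick B fun n => |B.f n x₀|) := by
  refine Metric.totallyBounded_of_forall_exists_dist_lt fun δ hδ => ?_
  obtain ⟨N, hN⟩ := hB.exists_forall_brick_norm_sub_sum_range_le x₀ (half_pos hδ)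
  let Φ : (ℕ → ℝ) → X := fun a => ∑ n ∈ range N, a n • B.e n
  have hK : IsCompact (Φ '' Set.univ.pi fun n => Set.Icc (-|B.f n x₀|) |B.f n x₀|) :=
    (isCompact_univ_pi fun _ => isCompact_Icc).image (by fun_prop)
  refine ⟨_, hK.totallyBounded, fun x hx => ⟨Φ fun n => B.f n x, ?_, ?_⟩⟩
  · exact ⟨_, fun n _ => abs_le.1 (hx n), rfl⟩
  · rw [dist_eq_norm]
    exact (hN x hx).trans_lt (half_lt_self hδ)

theorem isCompact_brick [CompleteSpace X] (hB : B.Unconditional) (x₀ : X) :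
    IsCompact (brick B fun n => |B.f n x₀|) :=
  (hB.totallyBounded_brick x₀).isCompact_of_isClosed (B.isClosed_brick _)

end Unconditional

end SchauderBasis'

theorem stmt12_general (X : Type*) [NormedAddCommGroup X] [NormedSpace ℝ X] [CompleteSpace X]
    (B : SchauderBasis' X) (hunc : B.Unconditional)
    (ε : ℕ → ℝ)
    (hext : ∃ x₀ : X, ∀ n, |B.f n x₀| = ε n) :
    IsCompact (brick B ε) := by
  obtain ⟨x₀, hx₀⟩ := hext
  obtain rfl : (fun n => |B.f n x₀|) = ε := funext hx₀
  exact hunc.isCompact_brick x₀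

/-- An unconditional brick with finite extreme radius (there is an extreme point, i.e.
a point `x₀` with `|B.f n x₀| = ε n` for all `n`, and the norms of extreme points are
bounded above) is compact. -/
theorem stmt12 (X : Type*) [NormedAddCommGroup X] [NormedSpace ℝ X] [CompleteSpace X]
    (B : SchauderBasis' X) (hnorm : ∀ n, ‖B.e n‖ = 1) (hunc : B.Unconditional)
    (ε : ℕ → ℝ) (hε : ∀ n, 0 ≤ ε n)
    (hext : ∃ x₀ : X, ∀ n, |B.f n x₀| = ε n)
    (hfin : BddAbove {c : ℝ | ∃ x₀ : X, (∀ n, |B.f n x₀| = ε n) ∧ c = ‖x₀‖}) :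
    IsCompact (brick B ε) :=
  stmt12_general X B hunc ε hext
end

section
/- Let B = (e_n) be a normalized Schauder basis of a Banach space X and E = (ε_n) nonnegative. The following are equivalent: (1) the brick K_{B,E} is compact; (2) for every scalar sequence (a_n) with |a_n| ≤ ε_n the series ∑ a_n e_n converges (K_{B,E} is holistic); (3) the series ∑ ε_n e_n converges unconditionally; (4) r^unc(K_{B,E}) = sup_{θ_n=±1} ‖∑ θ_n ε_n e_n‖ < ∞. -/
/-!
Everything runs through unconditional summability of `∑ εₙ eₙ`. If all the signed series
`∑ ±εₙ eₙ` converge, then so does every subseries; a sequence of disjoint blocks with sums of norm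
at least `δ` would make the subseries over their union diverge, so `∑ εₙ eₙ` is unconditionally
summable.

Testing `∑_{n ∈ F} aₙ eₙ` against a norming functional `g` and splitting `F` according to the
sign of `g eₙ` gives `‖∑_F aₙ eₙ‖ ≤ 2 sup_{F' ⊆ F} ‖∑_{F'} εₙ eₙ‖` whenever `|aₙ| ≤ εₙ`. This
transfers summability and a uniform bound from `ε` to every such `a`, and makes the partial sums
converge uniformly on the cube `∏ [-εₙ, εₙ]`; the brick is then the continuous image of that
compact cube.

Conversely, if the brick is compact, the partial sums of `∑ aₙ eₙ` lie in it, and the limit of a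
convergent subsequence has coefficients `aₙ`, so it is the sum of the whole series.
-/

open Filter Topology

section DominatedSums

variable {ι X : Type*} [NormedAddCommGroup X] [NormedSpace ℝ X]

theorem norm_sum_smul_le_two_mul {e : ι → X} {ε a : ι → ℝ} (ha : ∀ i, |a i| ≤ ε i)
    {F : Finset ι} {δ : ℝ} (hδ : ∀ F' ⊆ F, ‖∑ i ∈ F', ε i • e i‖ ≤ δ) :
    ‖∑ i ∈ F, a i • e i‖ ≤ 2 * δ := by
  classical
  obtain ⟨g, hg, hgx⟩ := exists_dual_vector'' ℝ (∑ i ∈ F, a i • e i)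
  have hg_apply (F' : Finset ι) (c : ι → ℝ) :
      g (∑ i ∈ F', c i • e i) = ∑ i ∈ F', c i * g (e i) := by
    simp only [map_sum, map_smul, smul_eq_mul]
  have hg_le : ∀ F' ⊆ F, |g (∑ i ∈ F', ε i • e i)| ≤ δ := fun F' hF' =>
    (g.le_of_opNorm_le hg _).trans (by rw [one_mul]; exact hδ F' hF')
  set P := F.filter fun i => 0 ≤ g (e i)
  set Q := F.filter fun i => ¬0 ≤ g (e i)
  have hP := le_of_abs_le (hg_le P (Finset.filter_subset _ _))
  have hQ := neg_le_of_abs_le (hg_le Q (Finset.filter_subset _ _))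
  calc ‖∑ i ∈ F, a i • e i‖ = ∑ i ∈ F, a i * g (e i) := by simpa [hg_apply] using hgx.symm
    _ ≤ ∑ i ∈ F, ε i * |g (e i)| := Finset.sum_le_sum fun i _ =>
        calc a i * g (e i) ≤ |a i| * |g (e i)| := by rw [← abs_mul]; exact le_abs_self _
          _ ≤ ε i * |g (e i)| := by gcongr; exact ha i
    _ = g (∑ i ∈ P, ε i • e i) - g (∑ i ∈ Q, ε i • e i) := by
        rw [hg_apply, hg_apply, ← Finset.sum_filter_add_sum_filter_not F fun i => 0 ≤ g (e i),
          sub_eq_add_neg, ← Finset.sum_neg_distrib]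
        congr 1 <;> refine Finset.sum_congr rfl fun i hi => ?_
        · rw [abs_of_nonneg (Finset.mem_filter.1 hi).2]
        · rw [abs_of_neg (not_le.1 (Finset.mem_filter.1 hi).2), mul_neg]
    _ ≤ 2 * δ := by linarith

theorem Summable.vanishing_norm_sum_smul_of_abs_le {e : ι → X} {ε : ι → ℝ}
    (hs : Summable fun i => ε i • e i) {δ : ℝ} (hδ : 0 < δ) :
    ∃ s : Finset ι, ∀ a : ι → ℝ, (∀ i, |a i| ≤ ε i) →
      ∀ t, Disjoint t s → ‖∑ i ∈ t, a i • e i‖ < δ := by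
  obtain ⟨s, hs_small⟩ := hs.vanishing (Metric.ball_mem_nhds 0 (by positivity : 0 < δ / 3))
  refine ⟨s, fun a ha t ht => ?_⟩
  calc ‖∑ i ∈ t, a i • e i‖ ≤ 2 * (δ / 3) := norm_sum_smul_le_two_mul ha fun t' ht' =>
        (mem_ball_zero_iff.1 (hs_small t' (ht.mono_left ht'))).le
    _ < δ := by linarith

theorem Summable.smul_of_abs_le [CompleteSpace X] {e : ι → X} {ε a : ι → ℝ}
    (hs : Summable fun i => ε i • e i) (ha : ∀ i, |a i| ≤ ε i) :
    Summable fun i => a i • e i :=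
  summable_iff_vanishing_norm.2 fun _δ hδ =>
    let ⟨s, hs_small⟩ := hs.vanishing_norm_sum_smul_of_abs_le hδ
    ⟨s, hs_small a ha⟩

theorem Summable.exists_norm_sum_le {E : Type*} [SeminormedAddCommGroup E] {f : ι → E}
    (hf : Summable f) : ∃ C, ∀ s : Finset ι, ‖∑ i ∈ s, f i‖ ≤ C := by
  classical
  obtain ⟨s₀, hs₀⟩ := hf.vanishing (Metric.ball_mem_nhds 0 one_pos)
  refine ⟨∑ i ∈ s₀, ‖f i‖ + 1, fun s => ?_⟩
  have htail : ‖∑ i ∈ s \ s₀, f i‖ < 1 := mem_ball_zero_iff.1 (hs₀ _ Finset.sdiff_disjoint)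
  calc ‖∑ i ∈ s, f i‖ = ‖∑ i ∈ s ∩ s₀, f i + ∑ i ∈ s \ s₀, f i‖ := by
        rw [Finset.sum_inter_add_sum_sdiff]
    _ ≤ ∑ i ∈ s ∩ s₀, ‖f i‖ + ‖∑ i ∈ s \ s₀, f i‖ := (norm_add_le _ _).trans (by
        gcongr; exact norm_sum_le _ _)
    _ ≤ ∑ i ∈ s₀, ‖f i‖ + 1 := by
        gcongr
        exact Finset.inter_subset_right

end DominatedSums

theorem summable_of_cauchySeq_sum_indicator {E : Type*} [NormedAddCommGroup E] [CompleteSpace E]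
    {u : ℕ → E} (h : ∀ A : Set ℕ, CauchySeq fun N => ∑ n ∈ Finset.range N, A.indicator u n) :
    Summable u := by
  classical
  by_contra hu
  simp only [summable_iff_vanishing_norm, not_forall, not_exists, not_lt] at hu
  obtain ⟨δ, hδ, hbig⟩ := hu
  -- Place blocks `t (N k) ⊆ [N k, N (k + 1))` with `‖∑ u‖ ≥ δ` one after another: the subseries
  -- over their union is not Cauchy.
  choose t ht_disj ht_big using fun N => hbig (Finset.range N)
  set next : ℕ → ℕ := fun N => N + 1 + (t N).sup id
  have ht_Ico (N : ℕ) : t N ⊆ Finset.Ico N (next N) := fun n hn => by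
    have h_ge : N ≤ n := not_lt.1 fun h => Finset.disjoint_left.1 (ht_disj N) hn (by simpa)
    have h_lt : n ≤ (t N).sup id := Finset.le_sup (f := id) hn
    simp only [Finset.mem_Ico, next]
    omega
  set N : ℕ → ℕ := fun k => next^[k] 0
  have hN_succ (k : ℕ) : N (k + 1) = next (N k) := Function.iterate_succ_apply' _ _ _
  have hN_mono : StrictMono N := strictMono_nat_of_lt_succ fun k => by
    simp only [hN_succ, next]; omega
  set A : Set ℕ := {n | ∃ k, n ∈ t (N k)}
  have hA_block (k : ℕ) : ∀ n ∈ Finset.Ico (N k) (N (k + 1)), n ∈ A ↔ n ∈ t (N k) := by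
    refine fun n hn => ⟨fun ⟨j, hj⟩ => ?_, fun hn => ⟨k, hn⟩⟩
    obtain rfl : j = k := by
      by_contra hjk
      refine Set.disjoint_left.1 (hN_mono.monotone.pairwise_disjoint_on_Ico_succ hjk) ?_
        (by simpa using hn)
      simpa [hN_succ] using ht_Ico _ hj
    exact hj
  have hincr (k : ℕ) : ∑ n ∈ Finset.range (N (k + 1)), A.indicator u n -
      ∑ n ∈ Finset.range (N k), A.indicator u n = ∑ n ∈ t (N k), u n := by
    rw [← Finset.sum_Ico_eq_sub _ (hN_mono.monotone k.le_succ),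
      ← Finset.sum_indicator_subset u (hN_succ k ▸ ht_Ico (N k))]
    refine Finset.sum_congr rfl fun n hn => ?_
    simp only [Set.indicator_apply, Finset.mem_coe, hA_block k n hn]
  obtain ⟨K, hK⟩ := Metric.cauchySeq_iff.1 (h A) δ hδ
  have := hK _ (hN_mono.le_apply.trans (hN_mono.monotone K.le_succ)) _ hN_mono.le_apply
  rw [dist_eq_norm, hincr] at this
  exact (ht_big (N K)).not_gt this

theorem summable_of_forall_tendsto_sum_sign_smul {E : Type*} [NormedAddCommGroup E]
    [NormedSpace ℝ E] [CompleteSpace E] {u : ℕ → E}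
    (h : ∀ θ : ℕ → ℝ, (∀ n, |θ n| = 1) →
      ∃ s, Tendsto (fun N => ∑ n ∈ Finset.range N, θ n • u n) atTop (𝓝 s)) :
    Summable u := by
  classical
  refine summable_of_cauchySeq_sum_indicator fun A => ?_
  obtain ⟨s₁, hs₁⟩ := h 1 fun n => by simp
  obtain ⟨s₂, hs₂⟩ := h (fun n => if n ∈ A then 1 else -1) fun n => by split_ifs <;> simp
  refine (((hs₁.add hs₂).const_smul (2⁻¹ : ℝ)).congr fun N => ?_).cauchySeq
  rw [← Finset.sum_add_distrib, Finset.smul_sum]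
  refine Finset.sum_congr rfl fun n _ => ?_
  by_cases hn : n ∈ A <;> simp [hn, ← two_smul ℝ]

namespace SchauderBasis'

variable {X : Type*} [NormedAddCommGroup X] [NormedSpace ℝ X] (B : SchauderBasis' X)

theorem f_sum_range_smul (a : ℕ → ℝ) (m N : ℕ) :
    B.f m (∑ n ∈ Finset.range N, a n • B.e n) = if m < N then a m else 0 := by
  simp [B.biorth]

theorem f_tsum_smul {a : ℕ → ℝ} (ha : Summable fun n => a n • B.e n) (m : ℕ) :
    B.f m (∑' n, a n • B.e n) = a m := by
  simp [(B.f m).map_tsum ha, B.biorth]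

theorem sum_range_smul_mem_brick {ε a : ℕ → ℝ} (hε : ∀ n, 0 ≤ ε n) (ha : ∀ n, |a n| ≤ ε n)
    (N : ℕ) : ∑ n ∈ Finset.range N, a n • B.e n ∈ brick B ε := fun m => by
  rw [f_sum_range_smul]
  split_ifs
  exacts [ha m, by simpa using hε m]

theorem exists_tendsto_sum_range_smul_of_isCompact_brick {ε a : ℕ → ℝ} (hε : ∀ n, 0 ≤ ε n)
    (hK : IsCompact (brick B ε)) (ha : ∀ n, |a n| ≤ ε n) :
    ∃ s, Tendsto (fun N => ∑ n ∈ Finset.range N, a n • B.e n) atTop (𝓝 s) := by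
  obtain ⟨x, -, φ, hφ, hx⟩ := hK.tendsto_subseq (B.sum_range_smul_mem_brick hε ha)
  have hcoeff (m : ℕ) : B.f m x = a m := by
    refine tendsto_nhds_unique (((B.f m).continuous.tendsto x).comp hx) ?_
    refine tendsto_const_nhds.congr' ?_
    filter_upwards [hφ.tendsto_atTop.eventually_gt_atTop m] with k hk
    simp only [Function.comp_apply, f_sum_range_smul, if_pos hk]
  exact ⟨x, by simpa only [hcoeff] using B.expansion x⟩

theorem isCompact_brick_of_summable [CompleteSpace X] {ε : ℕ → ℝ}
    (hs : Summable fun n => ε n • B.e n) : IsCompact (brick B ε) := by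
  set D : Set (ℕ → ℝ) := Set.univ.pi fun n => Set.Icc (-ε n) (ε n)
  have hD (a : ℕ → ℝ) : a ∈ D ↔ ∀ n, |a n| ≤ ε n := by simp [D, abs_le, Pi.le_def, forall_and]
  have hsum (a : ℕ → ℝ) (ha : a ∈ D) : Summable fun n => a n • B.e n :=
    hs.smul_of_abs_le ((hD a).1 ha)
  have himage : brick B ε = (fun a => ∑' n, a n • B.e n) '' D := by
    ext x
    refine ⟨fun hx => ⟨fun n => B.f n x, (hD _).2 hx, ?_⟩, ?_⟩
    · exact tendsto_nhds_unique (hsum _ ((hD _).2 hx)).hasSum.tendsto_sum_nat (B.expansion x)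
    · rintro ⟨a, ha, rfl⟩ m
      rw [B.f_tsum_smul (hsum a ha)]
      exact (hD a).1 ha m
  have hcont : ContinuousOn (fun a => ∑' n, a n • B.e n) D := by
    refine TendstoUniformlyOn.continuousOn (F := fun N a => ∑ n ∈ Finset.range N, a n • B.e n)
      (p := atTop) ?_ (Frequently.of_forall fun N => (by fun_prop : Continuous _).continuousOn)
    refine UniformCauchySeqOn.tendstoUniformlyOn_of_tendsto ?_
      fun a ha => (hsum a ha).hasSum.tendsto_sum_nat
    rw [Metric.uniformCauchySeqOn_iff]
    intro δ hδ
    obtain ⟨s, hs_small⟩ := hs.vanishing_norm_sum_smul_of_abs_le hδ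
    obtain ⟨N, hN⟩ := s.exists_nat_subset_range
    have hIco {m n : ℕ} (hn : N ≤ n) : Disjoint (Finset.Ico n m) s :=
      Finset.disjoint_of_subset_right (hN.trans (Finset.range_subset_range.2 hn))
        (Finset.disjoint_left.2 fun k hk hk' => by simp at hk hk'; omega)
    refine ⟨N, fun m hm n hn a ha => ?_⟩
    rcases le_total n m with hnm | hmn
    · rw [dist_eq_norm, ← Finset.sum_Ico_eq_sub _ hnm]
      exact hs_small a ((hD a).1 ha) _ (hIco hn)
    · rw [dist_comm, dist_eq_norm, ← Finset.sum_Ico_eq_sub _ hmn]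
      exact hs_small a ((hD a).1 ha) _ (hIco hm)
  rw [himage]
  exact (isCompact_univ_pi fun n => isCompact_Icc).image_of_continuousOn hcont

end SchauderBasis'

theorem stmt14_general (X : Type*) [NormedAddCommGroup X] [NormedSpace ℝ X] [CompleteSpace X]
    (B : SchauderBasis' X)
    (ε : ℕ → ℝ) (hε : ∀ n, 0 ≤ ε n) :
    (IsCompact (brick B ε) ↔
      (∀ a : ℕ → ℝ, (∀ n, |a n| ≤ ε n) →
        ∃ s : X, Tendsto (fun N => ∑ n ∈ Finset.range N, a n • B.e n) atTop (𝓝 s)))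
    ∧ ((∀ a : ℕ → ℝ, (∀ n, |a n| ≤ ε n) →
        ∃ s : X, Tendsto (fun N => ∑ n ∈ Finset.range N, a n • B.e n) atTop (𝓝 s)) ↔
      (∀ θ : ℕ → ℝ, (∀ n, |θ n| = 1) →
        ∃ s : X, Tendsto (fun N => ∑ n ∈ Finset.range N, (θ n * ε n) • B.e n) atTop (𝓝 s)))
    ∧ ((∀ θ : ℕ → ℝ, (∀ n, |θ n| = 1) →
        ∃ s : X, Tendsto (fun N => ∑ n ∈ Finset.range N, (θ n * ε n) • B.e n) atTop (𝓝 s)) ↔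
      (∃ r : ℝ, ∀ θ : ℕ → ℝ, (∀ n, |θ n| = 1) →
        ∃ s : X, Tendsto (fun N => ∑ n ∈ Finset.range N, (θ n * ε n) • B.e n) atTop (𝓝 s)
          ∧ ‖s‖ ≤ r)) := by
  have hsign (θ : ℕ → ℝ) (hθ : ∀ n, |θ n| = 1) (n : ℕ) : |θ n * ε n| ≤ ε n := by
    rw [abs_mul, hθ n, one_mul, abs_of_nonneg (hε n)]
  have hsummable : (∀ θ : ℕ → ℝ, (∀ n, |θ n| = 1) →
      ∃ s : X, Tendsto (fun N => ∑ n ∈ Finset.range N, (θ n * ε n) • B.e n) atTop (𝓝 s)) →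
      Summable fun n => ε n • B.e n := fun h3 =>
    summable_of_forall_tendsto_sum_sign_smul fun θ hθ => by simpa only [mul_smul] using h3 θ hθ
  refine ⟨⟨fun hK a ha => B.exists_tendsto_sum_range_smul_of_isCompact_brick hε hK ha,
      fun h2 => B.isCompact_brick_of_summable (hsummable fun θ hθ => h2 _ (hsign θ hθ))⟩,
    ⟨fun h2 θ hθ => h2 _ (hsign θ hθ),
      fun h3 a ha => ⟨_, ((hsummable h3).smul_of_abs_le ha).hasSum.tendsto_sum_nat⟩⟩,
    ⟨fun h3 => ?_, fun ⟨r, hr⟩ θ hθ => (hr θ hθ).imp fun _ => And.left⟩⟩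
  obtain ⟨C, hC⟩ := (hsummable h3).exists_norm_sum_le
  refine ⟨2 * C, fun θ hθ => ?_⟩
  obtain ⟨s, hs⟩ := h3 θ hθ
  exact ⟨s, hs, le_of_tendsto' hs.norm fun N =>
    norm_sum_smul_le_two_mul (hsign θ hθ) fun F _ => hC F⟩

/-- The compactness test for bricks: compactness ↔ being holistic ↔ unconditional
convergence of `∑ εₙ eₙ` (equivalently, convergence for every choice of signs) ↔
finiteness of the unconditional radius. -/
theorem stmt14 (X : Type*) [NormedAddCommGroup X] [NormedSpace ℝ X] [CompleteSpace X]
    (B : SchauderBasis' X) (hnorm : ∀ n, ‖B.e n‖ = 1)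
    (ε : ℕ → ℝ) (hε : ∀ n, 0 ≤ ε n) :
    (IsCompact (brick B ε) ↔
      (∀ a : ℕ → ℝ, (∀ n, |a n| ≤ ε n) →
        ∃ s : X, Tendsto (fun N => ∑ n ∈ Finset.range N, a n • B.e n) atTop (𝓝 s)))
    ∧ ((∀ a : ℕ → ℝ, (∀ n, |a n| ≤ ε n) →
        ∃ s : X, Tendsto (fun N => ∑ n ∈ Finset.range N, a n • B.e n) atTop (𝓝 s)) ↔
      (∀ θ : ℕ → ℝ, (∀ n, |θ n| = 1) →
        ∃ s : X, Tendsto (fun N => ∑ n ∈ Finset.range N, (θ n * ε n) • B.e n) atTop (𝓝 s)))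
    ∧ ((∀ θ : ℕ → ℝ, (∀ n, |θ n| = 1) →
        ∃ s : X, Tendsto (fun N => ∑ n ∈ Finset.range N, (θ n * ε n) • B.e n) atTop (𝓝 s)) ↔
      (∃ r : ℝ, ∀ θ : ℕ → ℝ, (∀ n, |θ n| = 1) →
        ∃ s : X, Tendsto (fun N => ∑ n ∈ Finset.range N, (θ n * ε n) • B.e n) atTop (𝓝 s)
          ∧ ‖s‖ ≤ r)) :=
  stmt14_general X B ε hε
end

section
/- (Gelfand) If a series ∑ x_n in a Banach space X converges unconditionally, then the set of all sums ∑ θ_n x_n over all sign sequences θ_n = ±1 is compact. -/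
/-!
The subseries sums `∑_{n ∈ A} xₙ` are half-sums of two sign series, hence converge. If the sums
of `x` over finite sets far out did not become uniformly small, infinitely many separated blocks
with large sums could be glued into one set `A` whose subseries diverges; so `x` is summable in
the unconditional sense. Every sign sum is then `2 ∑_{n ∈ A} xₙ - ∑ xₙ`, and `A ↦ ∑_{n ∈ A} xₙ`
is continuous on the Cantor space `ℕ → Bool`, because sums of a summable family over sets
avoiding a large finite set are uniformly small. The set of sign sums is therefore a continuous
image of a compact space.
-/

open Filter Topology

lemma exists_strictMono_blocks {T : ℕ → Finset ℕ} (hT : ∀ N, ∀ n ∈ T N, N ≤ n) :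
    ∃ b : ℕ → ℕ, StrictMono b ∧ ∀ k, ∀ n ∈ T (b k), b k ≤ n ∧ n < b (k + 1) := by
  obtain ⟨φ, hφ⟩ : ∃ φ : ℕ → ℕ, ∀ N, N < φ N ∧ ∀ n ∈ T N, n < φ N :=
    ⟨fun N => max N ((T N).sup id) + 1, fun N => ⟨Nat.lt_succ_of_le (le_max_left _ _),
      fun n hn => Nat.lt_succ_of_le (le_max_of_le_right (Finset.le_sup (f := id) hn))⟩⟩
  refine ⟨fun k => φ^[k] 0, strictMono_nat_of_lt_succ fun k => ?_, fun k n hn => ⟨hT _ n hn, ?_⟩⟩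
  all_goals simp only [Function.iterate_succ_apply']
  exacts [(hφ _).1, (hφ _).2 n hn]

lemma sum_Ico_indicator_eq_sum_block {E : Type*} [AddCommMonoid E] {b : ℕ → ℕ}
    (hb : StrictMono b) {T : ℕ → Finset ℕ} (hT : ∀ k, ∀ n ∈ T k, b k ≤ n ∧ n < b (k + 1))
    (x : ℕ → E) (k : ℕ) :
    ∑ n ∈ Finset.Ico (b k) (b (k + 1)), {n | ∃ j, n ∈ T j}.indicator x n = ∑ n ∈ T k, x n := by
  classical
  rw [Finset.sum_indicator_eq_sum_filter]
  congr 1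
  ext n
  simp only [Finset.mem_filter, Finset.mem_Ico, Set.mem_ofPred_eq]
  constructor
  · rintro ⟨⟨hkn, hnk⟩, j, hj⟩
    obtain ⟨hjn, hnj⟩ := hT j n hj
    have hjk : j < k + 1 := hb.lt_iff_lt.1 (hjn.trans_lt hnk)
    have hkj : k < j + 1 := hb.lt_iff_lt.1 (hkn.trans_lt hnj)
    rwa [show k = j by omega]
  · intro hn
    exact ⟨hT k n hn, k, hn⟩

theorem cauchySeq_finset_sum_of_cauchySeq_indicator {E : Type*} [SeminormedAddCommGroup E]
    {x : ℕ → E} (h : ∀ A : Set ℕ, CauchySeq fun N => ∑ n ∈ Finset.range N, A.indicator x n) :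
    CauchySeq fun s : Finset ℕ => ∑ n ∈ s, x n := by
  rw [cauchySeq_finset_iff_vanishing_norm]
  by_contra! hbad
  obtain ⟨ε, hε, hbad⟩ := hbad
  choose T hTdisj hTnorm using fun N => hbad (Finset.range N)
  have hT (N : ℕ) : ∀ n ∈ T N, N ≤ n := fun n hn => by
    simpa using Finset.disjoint_left.1 (hTdisj N) hn
  obtain ⟨b, hb, hblock⟩ := exists_strictMono_blocks hT
  obtain ⟨K, hK⟩ := Metric.cauchySeq_iff.1 (h {n | ∃ j, n ∈ T (b j)}) ε hε
  have hlt := hK _ (hb.le_apply.trans (hb.monotone K.le_succ)) _ hb.le_apply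
  rw [dist_eq_norm, ← Finset.sum_Ico_eq_sub _ (hb.monotone K.le_succ),
    sum_Ico_indicator_eq_sum_block hb hblock] at hlt
  exact (hTnorm _).not_gt hlt

lemma indicator_sub_indicator_eq_sdiff {α G : Type*} [AddGroup G] (s t : Set α) (f : α → G) :
    s.indicator f - t.indicator f = (s \ t).indicator f - (t \ s).indicator f := by
  ext a
  by_cases ha : a ∈ s <;> by_cases hb : a ∈ t <;> simp [ha, hb]

lemma exists_bool_of_eq_one_or_eq_neg_one {ι : Type*} {θ : ι → ℝ}
    (hθ : ∀ i, θ i = 1 ∨ θ i = -1) : ∃ b : ι → Bool, θ = fun i => if b i then 1 else -1 :=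
  ⟨fun i => decide (θ i = 1), funext fun i => by rcases hθ i with h | h <;> simp [h]⟩

section SubsetSums

variable {ι E : Type*} [NormedAddCommGroup E] [CompleteSpace E] {x : ι → E}

theorem Summable.continuous_tsum_indicator (hx : Summable x) :
    Continuous fun b : ι → Bool => ∑' i, {i | b i}.indicator x i := by
  refine continuous_iff_continuousAt.2 fun b => Metric.tendsto_nhds.2 fun ε hε => ?_
  obtain ⟨s, hs⟩ := hx.tsum_vanishing (Metric.ball_mem_nhds 0 (half_pos hε))
  have hagree : ∀ᶠ b' in 𝓝 b, ∀ i ∈ s, b' i = b i :=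
    (Finset.eventually_all s).2 fun i _ =>
      (continuous_apply i).continuousAt.eventually_mem
        ((isOpen_discrete {b i}).mem_nhds (Set.mem_singleton _))
  filter_upwards [hagree] with b' hb'
  have hdisj {p q : ι → Bool} (hpq : ∀ i ∈ s, p i = q i) :
      Disjoint ({i | p i} \ {i | q i}) (s : Set ι) :=
    Set.disjoint_left.2 fun i hi his => hi.2 <| by simpa [hpq i his] using hi.1
  have h₁ := hs _ (hdisj hb')
  have h₂ := hs _ (hdisj fun i hi => (hb' i hi).symm)
  rw [mem_ball_zero_iff, tsum_subtype] at h₁ h₂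
  rw [dist_eq_norm, ← (hx.indicator _).tsum_sub (hx.indicator _), ← Pi.sub_def,
    indicator_sub_indicator_eq_sdiff, Pi.sub_def, (hx.indicator _).tsum_sub (hx.indicator _)]
  calc _ ≤ _ := norm_sub_le _ _
    _ < ε / 2 + ε / 2 := add_lt_add h₁ h₂
    _ = ε := add_halves ε

variable [NormedSpace ℝ E]

theorem Summable.hasSum_sign_smul (hx : Summable x) (b : ι → Bool) :
    HasSum (fun i => (if b i then 1 else -1 : ℝ) • x i)
      ((2 : ℝ) • ∑' i, {i | b i}.indicator x i - ∑' i, x i) := by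
  convert ((hx.indicator _).hasSum.const_smul (2 : ℝ)).sub hx.hasSum using 1
  funext i
  by_cases hb : b i <;> simp [hb, two_smul]

end SubsetSums

theorem summable_of_forall_sign_tendsto {E : Type*} [NormedAddCommGroup E] [NormedSpace ℝ E]
    [CompleteSpace E] {x : ℕ → E}
    (hconv : ∀ θ : ℕ → ℝ, (∀ n, θ n = 1 ∨ θ n = -1) →
      ∃ s : E, Tendsto (fun N => ∑ n ∈ Finset.range N, θ n • x n) atTop (𝓝 s)) :
    Summable x := by
  classical
  refine summable_iff_cauchySeq_finset.2 (cauchySeq_finset_sum_of_cauchySeq_indicator fun A => ?_)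
  obtain ⟨s, hs⟩ := hconv (fun n => if n ∈ A then 1 else -1) fun n => by
    by_cases hn : n ∈ A <;> simp [hn]
  obtain ⟨s₁, hs₁⟩ := hconv 1 fun _ => Or.inl rfl
  refine (((hs.add hs₁).const_smul (2⁻¹ : ℝ)).congr fun N => ?_).cauchySeq
  rw [← Finset.sum_add_distrib, Finset.smul_sum]
  refine Finset.sum_congr rfl fun n _ => ?_
  by_cases hn : n ∈ A <;> simp [hn, ← add_smul, ← two_mul]

/-- Gelfand's theorem: if `∑ xₙ` converges unconditionally (equivalently, `∑ θₙ xₙ`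
converges for every choice of signs `θₙ = ±1`), then the set of all sums `∑ θₙ xₙ`
over all sign sequences is compact. -/
theorem stmt15 (X : Type*) [NormedAddCommGroup X] [NormedSpace ℝ X] [CompleteSpace X]
    (x : ℕ → X)
    (hconv : ∀ θ : ℕ → ℝ, (∀ n, θ n = 1 ∨ θ n = -1) →
      ∃ s : X, Tendsto (fun N => ∑ n ∈ Finset.range N, θ n • x n) atTop (𝓝 s)) :
    IsCompact {s : X | ∃ θ : ℕ → ℝ, (∀ n, θ n = 1 ∨ θ n = -1) ∧
      Tendsto (fun N => ∑ n ∈ Finset.range N, θ n • x n) atTop (𝓝 s)} := by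
  have hx : Summable x := summable_of_forall_sign_tendsto hconv
  convert isCompact_range (((hx.continuous_tsum_indicator).const_smul (2 : ℝ)).sub
    (continuous_const (y := ∑' n, x n))) using 1
  ext s
  constructor
  · rintro ⟨θ, hθ, hs⟩
    obtain ⟨b, rfl⟩ := exists_bool_of_eq_one_or_eq_neg_one hθ
    exact ⟨b, tendsto_nhds_unique (hx.hasSum_sign_smul b).tendsto_sum_nat hs⟩
  · rintro ⟨b, rfl⟩
    refine ⟨_, fun n => ?_, (hx.hasSum_sign_smul b).tendsto_sum_nat⟩
    cases b n <;> simp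
end
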